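/- Let ξ ∈ L²(ℝ^m) with 𝔼[ξ | 𝓐] = 0. Define ξ₁ = ξ and inductively let ηₙ be a best L² approximation of ξₙ among random variables independent of 𝓐, with ξ_{n+1} = ξₙ − ηₙ. Then for each n, ‖ξ₁‖² = ‖ξ_{n+1}‖² + ‖η₁‖² + ⋯ + ‖ηₙ‖², and consequently ‖η₁ + ⋯ + ηₙ‖ ≤ 2‖ξ‖. -/

import Mathlib

open MeasureTheory ProbabilityTheory MeasurableSpace
open scoped ENNReal RealInnerProductSpace

/-!
Variables independent of `𝓐` form a cone, so `ηₙ` also beats every competitor `c • ηₙ`; a best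
approximation from a line makes the residual orthogonal to it, hence `ξₙ₊₁ ⟂ ηₙ` and
`‖ξₙ‖² = ‖ξₙ₊₁‖² + ‖ηₙ‖²`. Telescoping gives the identity, in particular `‖ξₙ₊₁‖ ≤ ‖ξ‖`, and
`η₁ + ⋯ + ηₙ = ξ - ξₙ₊₁` then has norm at most `2‖ξ‖`.
-/

section InnerProductSpace

variable {F : Type*} [NormedAddCommGroup F] [InnerProductSpace ℝ F]

theorem real_inner_sub_eq_zero_of_forall_norm_sub_le {x y : F}
    (h : ∀ c : ℝ, ‖x - y‖ ≤ ‖x - c • y‖) : ⟪x - y, y⟫ = 0 := by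
  have hy : y ∈ ℝ ∙ y := Submodule.mem_span_singleton_self y
  refine ((ℝ ∙ y).norm_eq_iInf_iff_real_inner_eq_zero hy).1 (le_antisymm ?_ ?_) y hy
  · refine le_ciInf fun ⟨w, hw⟩ => ?_
    obtain ⟨c, rfl⟩ := Submodule.mem_span_singleton.1 hw
    exact h c
  · exact ciInf_le ⟨0, Set.forall_mem_range.2 fun _ => norm_nonneg _⟩
      (⟨y, hy⟩ : (ℝ ∙ y : Set F))

theorem norm_sq_eq_norm_sub_sq_add_norm_sq_of_forall_norm_sub_le {x y : F}
    (h : ∀ c : ℝ, ‖x - y‖ ≤ ‖x - c • y‖) : ‖x‖ ^ 2 = ‖x - y‖ ^ 2 + ‖y‖ ^ 2 := by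
  have := norm_add_sq_eq_norm_sq_add_norm_sq_real
    (real_inner_sub_eq_zero_of_forall_norm_sub_le h)
  rw [sub_add_cancel] at this
  rw [sq, sq, sq, this]

end InnerProductSpace

theorem eLpNorm_sq_eq_eLpNorm_sub_sq_add_eLpNorm_sq_of_forall_le
    {Ω E : Type*} [MeasurableSpace Ω] {μ : Measure Ω}
    [NormedAddCommGroup E] [InnerProductSpace ℝ E] {ξ η : Ω → E}
    (hξ : MemLp ξ 2 μ) (hη : MemLp η 2 μ)
    (h : ∀ c : ℝ, eLpNorm (ξ - η) 2 μ ≤ eLpNorm (ξ - c • η) 2 μ) :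
    eLpNorm ξ 2 μ ^ 2 = eLpNorm (ξ - η) 2 μ ^ 2 + eLpNorm η 2 μ ^ 2 := by
  set X := hξ.toLp ξ
  set Y := hη.toLp η
  have hsmul (c : ℝ) : eLpNorm (ξ - c • η) 2 μ = ENNReal.ofReal ‖X - c • Y‖ := by
    rw [ofReal_norm, ← MemLp.toLp_const_smul, ← MemLp.toLp_sub, Lp.enorm_toLp]
  have hsub : eLpNorm (ξ - η) 2 μ = ENNReal.ofReal ‖X - Y‖ := by simpa using hsmul 1
  have hpyth : ‖X‖ ^ 2 = ‖X - Y‖ ^ 2 + ‖Y‖ ^ 2 :=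
    norm_sq_eq_norm_sub_sq_add_norm_sq_of_forall_norm_sub_le fun c => by
      rw [← ENNReal.ofReal_le_ofReal_iff (norm_nonneg _), ← hsub, ← hsmul]
      exact h c
  rw [← Lp.enorm_toLp hξ, ← Lp.enorm_toLp hη, hsub, ← ofReal_norm, ← ofReal_norm]
  simp only [← ENNReal.ofReal_pow (norm_nonneg _)]
  rw [← ENNReal.ofReal_add (by positivity) (by positivity), hpyth]

theorem eq_add_sum_range_of_forall_eq_add {M : Type*} [AddCommMonoid M] {a b : ℕ → M}
    (h : ∀ n, a n = a (n + 1) + b n) (n : ℕ) : a 0 = a n + ∑ j ∈ Finset.range n, b j := by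
  induction n with
  | zero => simp
  | succ n ih => rw [ih, h n, Finset.sum_range_succ, add_assoc, add_comm (b n)]

theorem indep_comap_comp_left {Ω β γ : Type*} {m' mΩ : MeasurableSpace Ω} [MeasurableSpace β]
    [MeasurableSpace γ] {μ : Measure Ω} {ζ : Ω → β} {g : β → γ}
    (h : Indep (MeasurableSpace.comap ζ inferInstance) m' μ) (hg : Measurable g) :
    Indep (MeasurableSpace.comap (g ∘ ζ) inferInstance) m' μ :=
  indep_of_indep_of_le_left h (by rw [← comap_comp]; exact comap_mono hg.comap_le)

theorem successive_approx_norm_identity_general {Ω : Type*} (𝓐 : MeasurableSpace Ω)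
    [mΩ : MeasurableSpace Ω] (μ : Measure Ω)
    (m : ℕ)
    (ξ : Ω → EuclideanSpace ℝ (Fin m)) (hξ : MemLp ξ 2 μ)
    (ξs η : ℕ → Ω → EuclideanSpace ℝ (Fin m))
    (hinit : ξs 0 = ξ) (hstep : ∀ n, ξs (n + 1) = ξs n - η n)
    (hηmem : ∀ n, MemLp (η n) 2 μ)
    (hηindep : ∀ n, Indep (MeasurableSpace.comap (η n) inferInstance) 𝓐 μ)
    (hbest : ∀ n, ∀ ζ : Ω → EuclideanSpace ℝ (Fin m), MemLp ζ 2 μ →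
      Indep (MeasurableSpace.comap ζ inferInstance) 𝓐 μ →
      eLpNorm (ξs n - η n) 2 μ ≤ eLpNorm (ξs n - ζ) 2 μ) :
    ∀ n, eLpNorm ξ 2 μ ^ 2
        = eLpNorm (ξs n) 2 μ ^ 2 + ∑ j ∈ Finset.range n, eLpNorm (η j) 2 μ ^ 2
      ∧ eLpNorm (fun ω => ∑ j ∈ Finset.range n, η j ω) 2 μ ≤ 2 * eLpNorm ξ 2 μ := by
  have hmem (n : ℕ) : MemLp (ξs n) 2 μ := by
    induction n with
    | zero => rwa [hinit]
    | succ n ih => rw [hstep]; exact ih.sub (hηmem n)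
  have hpyth (n : ℕ) :
      eLpNorm (ξs n) 2 μ ^ 2 = eLpNorm (ξs (n + 1)) 2 μ ^ 2 + eLpNorm (η n) 2 μ ^ 2 := by
    rw [hstep]
    exact eLpNorm_sq_eq_eLpNorm_sub_sq_add_eLpNorm_sq_of_forall_le (hmem n) (hηmem n) fun c =>
      hbest n _ ((hηmem n).const_smul c)
        (indep_comap_comp_left (g := (c • ·)) (hηindep n) (measurable_const_smul c))
  intro n
  have hident := hinit ▸ eq_add_sum_range_of_forall_eq_add hpyth n
  refine ⟨hident, ?_⟩
  have hsum : (fun ω => ∑ j ∈ Finset.range n, η j ω) = ξ - ξs n := by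
    have hη (j : ℕ) : η j = ξs j - ξs (j + 1) := by rw [hstep, sub_sub_cancel]
    funext ω
    simp only [hη, Pi.sub_apply, Finset.sum_range_sub', hinit]
  have hle : eLpNorm (ξs n) 2 μ ≤ eLpNorm ξ 2 μ :=
    (ENNReal.pow_le_pow_left_iff two_ne_zero).1 (by rw [hident]; exact le_self_add)
  calc eLpNorm (fun ω => ∑ j ∈ Finset.range n, η j ω) 2 μ
      = eLpNorm (ξ - ξs n) 2 μ := by rw [hsum]
    _ ≤ eLpNorm ξ 2 μ + eLpNorm (ξs n) 2 μ :=
        eLpNorm_sub_le hξ.aestronglyMeasurable (hmem n).aestronglyMeasurable one_le_two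
    _ ≤ 2 * eLpNorm ξ 2 μ := by rw [two_mul]; gcongr

/-- For the successive best `L²` approximations `ηₙ` of `ξ` by variables independent of `𝓐`
(with `ξ₁ = ξ`, `ξ_{n+1} = ξₙ - ηₙ`), one has for each `n`
`‖ξ₁‖² = ‖ξ_{n+1}‖² + ‖η₁‖² + ⋯ + ‖ηₙ‖²`, hence `‖η₁ + ⋯ + ηₙ‖ ≤ 2‖ξ‖`. -/
theorem successive_approx_norm_identity {Ω : Type*} (𝓐 : MeasurableSpace Ω)
    [mΩ : MeasurableSpace Ω] (μ : Measure Ω) [IsProbabilityMeasure μ]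
    (h𝓐 : 𝓐 ≤ mΩ) (m : ℕ)
    (hatomless : ∃ U : Ω → ℝ, Measurable U ∧ μ.map U = volume.restrict (Set.Icc (0:ℝ) 1) ∧
      Indep (MeasurableSpace.comap U inferInstance) 𝓐 μ)
    (ξ : Ω → EuclideanSpace ℝ (Fin m)) (hξ : MemLp ξ 2 μ) (hξ0 : μ[ξ|𝓐] =ᵐ[μ] 0)
    (ξs η : ℕ → Ω → EuclideanSpace ℝ (Fin m))
    (hinit : ξs 0 = ξ) (hstep : ∀ n, ξs (n + 1) = ξs n - η n)
    (hηmem : ∀ n, MemLp (η n) 2 μ)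
    (hηindep : ∀ n, Indep (MeasurableSpace.comap (η n) inferInstance) 𝓐 μ)
    (hbest : ∀ n, ∀ ζ : Ω → EuclideanSpace ℝ (Fin m), MemLp ζ 2 μ →
      Indep (MeasurableSpace.comap ζ inferInstance) 𝓐 μ →
      eLpNorm (ξs n - η n) 2 μ ≤ eLpNorm (ξs n - ζ) 2 μ) :
    ∀ n, eLpNorm ξ 2 μ ^ 2
        = eLpNorm (ξs n) 2 μ ^ 2 + ∑ j ∈ Finset.range n, eLpNorm (η j) 2 μ ^ 2
      ∧ eLpNorm (fun ω => ∑ j ∈ Finset.range n, η j ω) 2 μ ≤ 2 * eLpNorm ξ 2 μ :=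
  successive_approx_norm_identity_general 𝓐 (mΩ := mΩ) μ m ξ hξ ξs η hinit hstep hηmem hηindep hbest
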